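/- Let λ, μ be partitions with n nonnegative integer parts, and let F, F′ ⊆ {(i,j) : n ≥ i > j ≥ 1} be subsets such that the BiKogan face K_{λ,μ}(F,F′) is reduced. If (P,Q) ∈ K_{λ,μ}(F,F′), then ϖ(F,F′) ≤ *(w(P,Q)) in the Bruhat order. -/

import Mathlib

open scoped Classical

namespace KK

/-- The simple transposition `s_j = (j, j+1)` in `S_n` (1-indexed letters `1 ≤ j ≤ n-1`);
junk value `1` out of range. -/
def simpleRefl (n : ℕ) (j : ℕ) : Equiv.Perm (Fin n) :=
  if h : 1 ≤ j ∧ j ≤ n - 1 then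
    Equiv.swap ⟨j - 1, by omega⟩ ⟨j, by omega⟩
  else 1

/-- The permutation represented by a word in the simple transpositions. -/
def wordProd (n : ℕ) (l : List ℕ) : Equiv.Perm (Fin n) :=
  (l.map (simpleRefl n)).prod

/-- Coxeter length: minimal length of a word in simple transpositions representing `w`. -/
noncomputable def len (n : ℕ) (w : Equiv.Perm (Fin n)) : ℕ :=
  sInf {k | ∃ l : List ℕ, (∀ j ∈ l, 1 ≤ j ∧ j ≤ n - 1) ∧ l.length = k ∧ wordProd n l = w}

/-- A word is reduced if its letters are genuine simple-transposition indices and its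
length equals the Coxeter length of the permutation it represents. -/
def IsReduced (n : ℕ) (l : List ℕ) : Prop :=
  (∀ j ∈ l, 1 ≤ j ∧ j ≤ n - 1) ∧ len n (wordProd n l) = l.length

/-- Bruhat order on `S_n`: `u ≤ w` iff some reduced word for `w` contains a reduced word
for `u` as a subword. -/
def bruhatLE (n : ℕ) (u w : Equiv.Perm (Fin n)) : Prop :=
  ∃ l l' : List ℕ, IsReduced n l ∧ wordProd n l = w ∧
    l'.Sublist l ∧ IsReduced n l' ∧ wordProd n l' = u

/-- `m` is the greatest element of `K` in the Bruhat order (hence the unique maximal one). -/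
def IsBruhatGreatest (n : ℕ) (K : Set (Equiv.Perm (Fin n))) (m : Equiv.Perm (Fin n)) : Prop :=
  m ∈ K ∧ ∀ u ∈ K, bruhatLE n u m

/-- `m` is the least element of `K` in the Bruhat order (hence the unique minimal one). -/
def IsBruhatLeast (n : ℕ) (K : Set (Equiv.Perm (Fin n))) (m : Equiv.Perm (Fin n)) : Prop :=
  m ∈ K ∧ ∀ u ∈ K, bruhatLE n m u

/-- One step of the Demazure product: `w * s_j = max {w, w s_j}` in the Bruhat order. -/
noncomputable def demStep (n : ℕ) (w : Equiv.Perm (Fin n)) (j : ℕ) : Equiv.Perm (Fin n) :=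
  if len n w < len n (w * simpleRefl n j) then w * simpleRefl n j else w

/-- The Demazure product `*(w)` of a (not necessarily reduced) word. -/
noncomputable def demProd (n : ℕ) (l : List ℕ) : Equiv.Perm (Fin n) :=
  l.foldl (demStep n) 1

/-- The binary Demazure product of two permutations, `w * w' = max I(w)I(w')`. -/
noncomputable def demMul (n : ℕ) (w w' : Equiv.Perm (Fin n)) : Equiv.Perm (Fin n) :=
  if h : ∃ m, IsBruhatGreatest n
      {x | ∃ u v, bruhatLE n u w ∧ bruhatLE n v w' ∧ x = u * v} m
  then h.choose else 1

/-- The longest element `w₀` of `S_n`. -/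
def w0 (n : ℕ) : Equiv.Perm (Fin n) := Fin.revPerm



/-- `μ` is a partition with `n` nonnegative integer parts `μ 1 ≥ ⋯ ≥ μ n ≥ 0`. -/
def IsPartition (n : ℕ) (μ : ℕ → ℤ) : Prop :=
  (∀ i, 1 ≤ i → i < n → μ (i + 1) ≤ μ i) ∧ 0 ≤ μ n

/-- `(i, j)` indexes an entry strictly below the top in the triangular array:
`n ≥ i > j ≥ 1`. -/
def inTriangle (n : ℕ) (p : ℕ × ℕ) : Prop := 1 ≤ p.2 ∧ p.2 < p.1 ∧ p.1 ≤ n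

/-- A Gelfand–Tsetlin pattern of size `n`, encoded as a function `a : ℕ → ℕ → ℝ`
(value `a i j` for `n ≥ i ≥ j ≥ 1`, and `0` outside the triangle). -/
def IsGTArray (n : ℕ) (a : ℕ → ℕ → ℝ) : Prop :=
  (∀ i j, 1 ≤ j → j < i → i ≤ n →
      0 ≤ a i j - a (i - 1) j ∧ 0 ≤ a (i - 1) j - a i (j + 1)) ∧
  (∀ i j, j = 0 ∨ i < j ∨ n < i → a i j = 0)

/-- The Gelfand–Tsetlin polytope `GT(μ)`: GT patterns of size `n` with bottom row `μ`. -/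
def GTset (n : ℕ) (μ : ℕ → ℤ) : Set (ℕ → ℕ → ℝ) :=
  {a | IsGTArray n a ∧ ∀ j, 1 ≤ j → j ≤ n → a n j = (μ j : ℝ)}

/-- The integral points `GT_ℤ(μ)` of the Gelfand–Tsetlin polytope. -/
def GTZ (n : ℕ) (μ : ℕ → ℤ) : Set (ℕ → ℕ → ℝ) :=
  {a ∈ GTset n μ | ∀ i j, ∃ m : ℤ, a i j = (m : ℝ)}

/-- The weight of a GT pattern: `wt a i = Σ_{j=1}^i a i j − Σ_{j=1}^{i-1} a (i-1) j`. -/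
noncomputable def wt (a : ℕ → ℕ → ℝ) (i : ℕ) : ℝ :=
  (∑ j ∈ Finset.Icc 1 i, a i j) - ∑ j ∈ Finset.Icc 1 (i - 1), a (i - 1) j

/-- The pairs `(i,j)` with `n ≥ i > j ≥ 1` in increasing lexicographic order. -/
def pairsLex (n : ℕ) : List (ℕ × ℕ) :=
  (List.range' 2 (n - 1)).flatMap fun i => (List.range' 1 (i - 1)).map fun j => (i, j)

/-- The pairs `(i,j)` with `n ≥ i > j ≥ 1` in increasing order for the total order in
which `(i,j)` precedes `(i',j')` iff `i < i'`, or `i = i'` and `j > j'`. -/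
def pairsBar (n : ℕ) : List (ℕ × ℕ) :=
  (List.range' 2 (n - 1)).flatMap fun i => ((List.range' 1 (i - 1)).reverse).map fun j => (i, j)

/-- The pairs `(i,j)` with `n ≥ i > j ≥ 1` in decreasing order for the total order in
which `(i,j)` precedes `(i',j')` iff `i < i'`, or `i = i'` and `j > j'`:
`i` descending and, within each `i`, `j` ascending. -/
def pairsFin (n : ℕ) : List (ℕ × ℕ) :=
  ((List.range' 2 (n - 1)).reverse).flatMap fun i => (List.range' 1 (i - 1)).map fun j => (i, j)

/-- The word `𝔣(P)`: list the pairs `(i,j)` with `a (i-1) j = a i (j+1)` in the order of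
`pairsFin` and record the letter `j` for each. -/
noncomputable def fWord (n : ℕ) (a : ℕ → ℕ → ℝ) : List ℕ :=
  ((pairsFin n).filter fun p => a (p.1 - 1) p.2 = a p.1 (p.2 + 1)).map fun p => p.2

/-- The word `𝔦(Q)`: list the pairs `(i,j)` with `b i j = b (i-1) j` in increasing
lexicographic order and record the letter `i - j` for each. -/
noncomputable def iWord (n : ℕ) (b : ℕ → ℕ → ℝ) : List ℕ :=
  ((pairsLex n).filter fun p => b p.1 p.2 = b (p.1 - 1) p.2).map fun p => p.1 - p.2



/-- The sequence `d_t`, `1 ≤ t ≤ i+1`, used to define the crystal operators `e_i, f_i`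
(with the convention `a_{k,k+1} = 0` for `k ∈ {i-1, i}`). -/
noncomputable def dseq (a : ℕ → ℕ → ℝ) (i : ℕ) : ℕ → ℝ
  | 0 => 0
  | 1 => a i 1 - a (i + 1) 1
  | (t + 2) => dseq a i (t + 1) + a i (t + 1) + (if t + 2 = i + 1 then 0 else a i (t + 2))
      - (if t + 1 = i then 0 else a (i - 1) (t + 1)) - a (i + 1) (t + 2)

/-- `d = min {d_1, …, d_{i+1}}`. -/
noncomputable def dmin (a : ℕ → ℕ → ℝ) (i : ℕ) : ℝ :=
  ((Finset.Icc 1 (i + 1)).image (dseq a i)).min'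
    (Finset.Nonempty.image ⟨1, by simp⟩ _)

/-- `m`: the smallest index `t ∈ [1, i+1]` with `d_t = d`. -/
noncomputable def mIdx (a : ℕ → ℕ → ℝ) (i : ℕ) : ℕ :=
  sInf {t | t ∈ Finset.Icc 1 (i + 1) ∧ dseq a i t = dmin a i}

/-- `M`: the largest index `t ∈ [1, i+1]` with `d_t = d`. -/
noncomputable def MIdx (a : ℕ → ℕ → ℝ) (i : ℕ) : ℕ :=
  sSup {t | t ∈ Finset.Icc 1 (i + 1) ∧ dseq a i t = dmin a i}

/-- The raising crystal operator `e_i` (`none` plays the role of `0`). -/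
noncomputable def eOp (i : ℕ) (a : ℕ → ℕ → ℝ) : Option (ℕ → ℕ → ℝ) :=
  if dmin a i = 0 then none
  else some fun i' j' => if i' = i ∧ j' = mIdx a i then a i' j' + 1 else a i' j'

/-- The lowering crystal operator `f_i` (`none` plays the role of `0`). -/
noncomputable def fOp (i : ℕ) (a : ℕ → ℕ → ℝ) : Option (ℕ → ℕ → ℝ) :=
  if MIdx a i = i + 1 then none
  else some fun i' j' => if i' = i ∧ j' = MIdx a i then a i' j' - 1 else a i' j'

/-- `m`-fold iteration of a partial operator. -/
noncomputable def iterOp (op : (ℕ → ℕ → ℝ) → Option (ℕ → ℕ → ℝ)) :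
    ℕ → (ℕ → ℕ → ℝ) → Option (ℕ → ℕ → ℝ)
  | 0 => fun x => some x
  | (m + 1) => fun x => (op x).bind (iterOp op m)

/-- Apply `op i₁ ^ m₁ ∘ ⋯ ∘ op i_k ^ m_k` to `x`, given the list `[(i₁,m₁),…,(i_k,m_k)]`
(the last pair acts first). -/
noncomputable def applyWord (op : ℕ → (ℕ → ℕ → ℝ) → Option (ℕ → ℕ → ℝ)) :
    List (ℕ × ℕ) → (ℕ → ℕ → ℝ) → Option (ℕ → ℕ → ℝ)
  | [] => fun x => some x
  | (p :: rest) => fun x => (applyWord op rest x).bind (iterOp (op p.1) p.2)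

/-- The highest-weight element `G⁰_μ` of `GT_ℤ(μ)`: the element killed by every `e_i`. -/
noncomputable def G0 (n : ℕ) (μ : ℕ → ℤ) : ℕ → ℕ → ℝ :=
  if h : ∃ P, P ∈ GTZ n μ ∧ ∀ i, 1 ≤ i → i ≤ n - 1 → eOp i P = none then h.choose else 0

/-- The lowest-weight element `G*_μ` of `GT_ℤ(μ)`: the element killed by every `f_i`. -/
noncomputable def Gstar (n : ℕ) (μ : ℕ → ℤ) : ℕ → ℕ → ℝ :=
  if h : ∃ P, P ∈ GTZ n μ ∧ ∀ i, 1 ≤ i → i ≤ n - 1 → fOp i P = none then h.choose else 0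

/-- The Demazure crystal `D(μ, w)` computed from the reduced word `l` for `w`:
`{f_{i₁}^{m₁} ⋯ f_{i_k}^{m_k}(G⁰_μ)} ∩ GT_ℤ(μ)`. -/
noncomputable def demCrystal (n : ℕ) (μ : ℕ → ℤ) (l : List ℕ) : Set (ℕ → ℕ → ℝ) :=
  {P | P ∈ GTZ n μ ∧
    ∃ ms : List ℕ, ms.length = l.length ∧ applyWord fOp (l.zip ms) (G0 n μ) = some P}

/-- The opposite Demazure crystal `D(μ, w)^op` computed from the reduced word `l`
for `w·w₀`: `{e_{j₁}^{m₁} ⋯ e_{j_t}^{m_t}(G*_μ)} ∩ GT_ℤ(μ)`. -/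
noncomputable def opDemCrystal (n : ℕ) (μ : ℕ → ℤ) (l : List ℕ) : Set (ℕ → ℕ → ℝ) :=
  {P | P ∈ GTZ n μ ∧
    ∃ ms : List ℕ, ms.length = l.length ∧ applyWord eOp (l.zip ms) (Gstar n μ) = some P}

/-- `σ(F)`: the product of `s_{i-j}` over `(i,j) ∈ F` in increasing lexicographic order. -/
noncomputable def sigmaF (n : ℕ) (F : Finset (ℕ × ℕ)) : Equiv.Perm (Fin n) :=
  wordProd n (((pairsLex n).filter fun p => p ∈ F).map fun p => p.1 - p.2)

/-- `σ̄(F)`: the product of `s_j` over `(i,j) ∈ F` in increasing order for the total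
order in which `(i,j)` precedes `(i',j')` iff `i < i'`, or `i = i'` and `j > j'`. -/
noncomputable def sigmaBarF (n : ℕ) (F : Finset (ℕ × ℕ)) : Equiv.Perm (Fin n) :=
  wordProd n (((pairsBar n).filter fun p => p ∈ F).map fun p => p.2)

/-- The Kogan face `K(μ, F)`: the face of `GT(μ)` cut out by `a i j = a (i-1) j`,
`(i,j) ∈ F`. -/
def KoganFace (n : ℕ) (μ : ℕ → ℤ) (F : Finset (ℕ × ℕ)) : Set (ℕ → ℕ → ℝ) :=
  {a ∈ GTset n μ | ∀ p ∈ F, a p.1 p.2 = a (p.1 - 1) p.2}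

/-- The dual Kogan face `K̄(μ, F)`: the face of `GT(μ)` cut out by
`a (i-1) j = a i (j+1)`, `(i,j) ∈ F`. -/
def dualKoganFace (n : ℕ) (μ : ℕ → ℤ) (F : Finset (ℕ × ℕ)) : Set (ℕ → ℕ → ℝ) :=
  {a ∈ GTset n μ | ∀ p ∈ F, a (p.1 - 1) p.2 = a p.1 (p.2 + 1)}

/-- The BiKogan face `K_{λ,μ}(F, F')` of `GT(λ) × GT(μ)`. -/
def biKoganFace (n : ℕ) (lam μ : ℕ → ℤ) (F F' : Finset (ℕ × ℕ)) :
    Set ((ℕ → ℕ → ℝ) × (ℕ → ℕ → ℝ)) :=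
  {PQ | PQ.1 ∈ GTset n lam ∧ PQ.2 ∈ GTset n μ ∧
    (∀ p ∈ F, PQ.1 (p.1 - 1) p.2 = PQ.1 p.1 (p.2 + 1)) ∧
    (∀ p ∈ F', PQ.2 p.1 p.2 = PQ.2 (p.1 - 1) p.2)}

/-- `ϖ(F, F') = σ̄(F)⁻¹ · σ(F')`. -/
noncomputable def biVarpi (n : ℕ) (F F' : Finset (ℕ × ℕ)) : Equiv.Perm (Fin n) :=
  (sigmaBarF n F)⁻¹ * sigmaF n F'

/-- The BiKogan face `K_{λ,μ}(F, F')` is reduced if `ℓ(ϖ(F,F')) = |F| + |F'|`. -/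
def biKoganReduced (n : ℕ) (F F' : Finset (ℕ × ℕ)) : Prop :=
  len n (biVarpi n F F') = F.card + F'.card


/-! The product of a subword of a word is below its Demazure product, and `ϖ(F,F')` is the
product of a subword of `w(P,Q)`: the letters of the pairs of `F` and `F'`, which occur in
`𝔣(P)` and `𝔦(Q)` because `(P,Q)` satisfies the equations of the face.

The Bruhat order is handled through its chain description: `u ≤ w` iff `w` is reached from `u`
by right multiplications by transpositions, each adding inversions. Demazure multiplication
by `s` is monotone for this order, since for a single step `z < w = z t` either `z s = w` or
`z s < w s`; this lifting property and the subword property, which turns chains into the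
subword description of the Bruhat order, both come from the strong exchange property. -/

def IsSimpleWord (n : ℕ) (l : List ℕ) : Prop := ∀ j ∈ l, 1 ≤ j ∧ j ≤ n - 1

section
variable {n : ℕ}

theorem IsSimpleWord.sublist {l l' : List ℕ} (hl : IsSimpleWord n l) (h : l'.Sublist l) :
    IsSimpleWord n l' :=
  fun j hj => hl j (h.mem hj)

theorem IsSimpleWord.concat {l : List ℕ} (hl : IsSimpleWord n l) {j : ℕ}
    (hj : 1 ≤ j ∧ j ≤ n - 1) : IsSimpleWord n (l ++ [j]) := fun k hk =>
  (List.mem_append.1 hk).elim (hl k) fun hk => List.mem_singleton.1 hk ▸ hj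

theorem exists_simpleRefl_eq_swap {j : ℕ} (hj : 1 ≤ j ∧ j ≤ n - 1) :
    ∃ p q : Fin n, (q : ℕ) = p + 1 ∧ simpleRefl n j = Equiv.swap p q :=
  ⟨(⟨j - 1, by omega⟩ : Fin n), ⟨j, by omega⟩, by simp; omega, dif_pos hj⟩

theorem simpleRefl_eq_one {j : ℕ} (hj : ¬(1 ≤ j ∧ j ≤ n - 1)) : simpleRefl n j = 1 :=
  dif_neg hj

theorem simpleRefl_mul_self (j : ℕ) : simpleRefl n j * simpleRefl n j = 1 := by
  unfold simpleRefl
  split <;> simp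

theorem simpleRefl_inv (j : ℕ) : (simpleRefl n j)⁻¹ = simpleRefl n j :=
  inv_eq_of_mul_eq_one_right (simpleRefl_mul_self j)

theorem mul_simpleRefl_mul_simpleRefl (w : Equiv.Perm (Fin n)) (j : ℕ) :
    w * simpleRefl n j * simpleRefl n j = w := by
  rw [mul_assoc, simpleRefl_mul_self, mul_one]

theorem wordProd_append (l l' : List ℕ) :
    wordProd n (l ++ l') = wordProd n l * wordProd n l' := by
  simp [wordProd]

theorem wordProd_cons (c : ℕ) (l : List ℕ) :
    wordProd n (c :: l) = simpleRefl n c * wordProd n l := by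
  simp [wordProd]

theorem wordProd_concat (l : List ℕ) (c : ℕ) :
    wordProd n (l ++ [c]) = wordProd n l * simpleRefl n c := by
  simp [wordProd]

theorem wordProd_reverse (l : List ℕ) : wordProd n l.reverse = (wordProd n l)⁻¹ := by
  induction l with
  | nil => simp [wordProd]
  | cons c l ih =>
    rw [List.reverse_cons, wordProd_concat, ih, wordProd_cons, mul_inv_rev, simpleRefl_inv]

theorem exists_word (w : Equiv.Perm (Fin n)) : ∃ l, IsSimpleWord n l ∧ wordProd n l = w := by
  rcases n with - | m
  · exact ⟨[], by simp [IsSimpleWord], Subsingleton.elim _ _⟩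
  have hw : w ∈ Submonoid.closure (Set.range fun i : Fin m ↦ Equiv.swap i.castSucc i.succ) := by
    rw [Equiv.Perm.mclosure_swap_castSucc_succ m]
    trivial
  induction hw using Submonoid.closure_induction with
  | one => exact ⟨[], by simp [IsSimpleWord], rfl⟩
  | mul x y _ _ hx hy =>
    obtain ⟨lx, hlx, rfl⟩ := hx
    obtain ⟨ly, hly, rfl⟩ := hy
    refine ⟨lx ++ ly, fun j hj => ?_, wordProd_append lx ly⟩
    exact (List.mem_append.1 hj).elim (hlx j) (hly j)
  | mem x hx =>
    obtain ⟨i, rfl⟩ := hx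
    refine ⟨[i + 1], by simp [IsSimpleWord], ?_⟩
    rw [wordProd, List.map_singleton, List.prod_singleton, simpleRefl, dif_pos (by omega)]
    rfl

theorem len_wordProd_le {l : List ℕ} (hl : IsSimpleWord n l) : len n (wordProd n l) ≤ l.length :=
  Nat.sInf_le ⟨l, hl, rfl, rfl⟩

theorem exists_reduced_word (w : Equiv.Perm (Fin n)) :
    ∃ l, IsSimpleWord n l ∧ l.length = len n w ∧ wordProd n l = w := by
  obtain ⟨l, hl, hw⟩ := exists_word w
  exact Nat.sInf_mem (s := {k | ∃ l, IsSimpleWord n l ∧ l.length = k ∧ wordProd n l = w})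
    ⟨l.length, l, hl, rfl, hw⟩

theorem len_one : len n 1 = 0 :=
  Nat.le_zero.1 (len_wordProd_le (l := []) (by simp [IsSimpleWord]))

theorem len_mul_simpleRefl_le (w : Equiv.Perm (Fin n)) {j : ℕ} (hj : 1 ≤ j ∧ j ≤ n - 1) :
    len n (w * simpleRefl n j) ≤ len n w + 1 := by
  obtain ⟨l, hl, hlen, rfl⟩ := exists_reduced_word w
  simpa [wordProd_concat, hlen] using len_wordProd_le (hl.concat hj)

theorem eq_and_eq_of_swap_lt_swap {p q x y : Fin n} (hpq : (q : ℕ) = p + 1) (hxy : x < y)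
    (h : Equiv.swap p q y < Equiv.swap p q x) : x = p ∧ y = q := by
  simp only [Equiv.swap_apply_def] at h
  simp only [Fin.lt_def, Fin.ext_iff] at *
  split_ifs at h <;> omega

theorem strong_exchange {L : List ℕ} (hL : IsSimpleWord n L) {a b : Fin n} (hab : a < b)
    (hw : wordProd n L b < wordProd n L a) :
    ∃ i < L.length, wordProd n (L.eraseIdx i) = wordProd n L * Equiv.swap a b := by
  induction L with
  | nil => exact absurd hw (not_lt.2 hab.le)
  | cons c T ih =>
    obtain ⟨hc, hT⟩ := List.forall_mem_cons.1 hL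
    rcases lt_or_gt_of_ne ((wordProd n T).injective.ne hab.ne) with hlt | hgt
    · obtain ⟨p, q, hpq, hs⟩ := exists_simpleRefl_eq_swap hc
      rw [wordProd_cons, hs] at hw ⊢
      obtain ⟨hp, hq⟩ := eq_and_eq_of_swap_lt_swap hpq hlt hw
      refine ⟨0, by simp, ?_⟩
      rw [List.eraseIdx_cons_zero, ← hp, ← hq, Equiv.swap_apply_apply]
      simp [mul_assoc]
    · obtain ⟨i, hi, heq⟩ := ih hT hgt
      refine ⟨i + 1, by simpa using hi, ?_⟩
      rw [List.eraseIdx_cons_succ, wordProd_cons, heq, wordProd_cons, mul_assoc]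

def BruhatStep (n : ℕ) (v w : Equiv.Perm (Fin n)) : Prop :=
  ∃ a b : Fin n, a < b ∧ w b < w a ∧ v = w * Equiv.swap a b

theorem BruhatStep.exists_eraseIdx {v w : Equiv.Perm (Fin n)} (h : BruhatStep n v w)
    {L : List ℕ} (hL : IsSimpleWord n L) (hw : wordProd n L = w) :
    ∃ i < L.length, wordProd n (L.eraseIdx i) = v := by
  obtain ⟨a, b, hab, hba, rfl⟩ := h
  subst hw
  exact strong_exchange hL hab hba

theorem BruhatStep.len_lt {v w : Equiv.Perm (Fin n)} (h : BruhatStep n v w) :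
    len n v < len n w := by
  obtain ⟨L, hL, hlen, hw⟩ := exists_reduced_word w
  obtain ⟨i, hi, hv⟩ := h.exists_eraseIdx hL hw
  have := len_wordProd_le (hL.sublist (List.eraseIdx_sublist L i))
  rw [hv, List.length_eraseIdx_of_lt hi] at this
  omega

theorem bruhatStep_mul_swap_or (w : Equiv.Perm (Fin n)) {a b : Fin n} (hab : a ≠ b) :
    BruhatStep n (w * Equiv.swap a b) w ∨ BruhatStep n w (w * Equiv.swap a b) := by
  wlog hlt : a < b generalizing a b
  · rw [Equiv.swap_comm]
    exact this hab.symm (lt_of_le_of_ne (not_lt.1 hlt) hab.symm)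
  rcases lt_or_gt_of_ne (w.injective.ne hab) with hw | hw
  · exact .inr ⟨a, b, hlt, by simpa using hw, by simp [mul_assoc]⟩
  · exact .inl ⟨a, b, hlt, hw, rfl⟩

theorem bruhatStep_mul_swap_of_len_lt {w : Equiv.Perm (Fin n)} {a b : Fin n} (hab : a ≠ b)
    (h : len n (w * Equiv.swap a b) < len n w) : BruhatStep n (w * Equiv.swap a b) w :=
  (bruhatStep_mul_swap_or w hab).resolve_right fun h' => h'.len_lt.asymm h

theorem bruhatStep_mul_simpleRefl_or (w : Equiv.Perm (Fin n)) {j : ℕ}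
    (hj : 1 ≤ j ∧ j ≤ n - 1) :
    BruhatStep n (w * simpleRefl n j) w ∨ BruhatStep n w (w * simpleRefl n j) := by
  obtain ⟨p, q, hpq, hs⟩ := exists_simpleRefl_eq_swap hj
  rw [hs]
  exact bruhatStep_mul_swap_or w (Fin.ne_of_val_ne (by omega))

theorem exists_reduced_sublist {L : List ℕ} (hL : IsSimpleWord n L) :
    ∃ R, R.Sublist L ∧ wordProd n R = wordProd n L ∧ R.length = len n (wordProd n L) := by
  induction L using List.reverseRecOn with
  | nil => exact ⟨[], List.Sublist.refl _, rfl, len_one.symm⟩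
  | append_singleton T c ih =>
    have hT : IsSimpleWord n T := hL.sublist (List.sublist_append_left T [c])
    have hc : 1 ≤ c ∧ c ≤ n - 1 := hL c (by simp)
    obtain ⟨R, hRT, hR, hRlen⟩ := ih hT
    rw [wordProd_concat]
    rw [← hR] at hRlen ⊢
    rcases bruhatStep_mul_simpleRefl_or (wordProd n R) hc with h | h
    · obtain ⟨i, hi, hRi⟩ := h.exists_eraseIdx (hT.sublist hRT) rfl
      refine ⟨R.eraseIdx i, ((List.eraseIdx_sublist R i).trans hRT).trans
        (List.sublist_append_left T [c]), hRi, ?_⟩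
      have hle := len_wordProd_le ((hT.sublist hRT).sublist (List.eraseIdx_sublist R i))
      have hge := len_mul_simpleRefl_le (wordProd n R * simpleRefl n c) hc
      rw [hRi] at hle
      rw [mul_simpleRefl_mul_simpleRefl] at hge
      rw [List.length_eraseIdx_of_lt hi] at hle ⊢
      omega
    · refine ⟨R ++ [c], hRT.append (List.Sublist.refl _), wordProd_concat R c, ?_⟩
      have := h.len_lt
      have := len_mul_simpleRefl_le (wordProd n R) hc
      simp only [List.length_append, List.length_singleton]
      omega

theorem BruhatStep.mul_simpleRefl_eq_or_len_lt {z w : Equiv.Perm (Fin n)}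
    (h : BruhatStep n z w) {j : ℕ} (hj : 1 ≤ j ∧ j ≤ n - 1) :
    z * simpleRefl n j = w ∨ len n (z * simpleRefl n j) < len n (w * simpleRefl n j) := by
  -- Exchange in `R ++ [j]`, with `R` reduced for `w s`: deleting the last letter leaves
  -- `z = w s`, deleting another one leaves a word for `z s` shorter than `R`.
  obtain ⟨R, hR, hlen, hRw⟩ := exists_reduced_word (w * simpleRefl n j)
  obtain ⟨i, hi, hz⟩ := h.exists_eraseIdx (hR.concat hj)
    (by rw [wordProd_concat, hRw, mul_simpleRefl_mul_simpleRefl])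
  rw [List.length_append, List.length_singleton] at hi
  rcases (Nat.lt_succ_iff.1 hi).lt_or_eq with hi | rfl
  · right
    rw [List.eraseIdx_append_of_lt_length hi, wordProd_concat] at hz
    rw [← hz, mul_simpleRefl_mul_simpleRefl, ← hlen]
    calc len n (wordProd n (R.eraseIdx i)) ≤ (R.eraseIdx i).length :=
          len_wordProd_le (hR.sublist (List.eraseIdx_sublist R i))
      _ < R.length := by rw [List.length_eraseIdx_of_lt hi]; omega
  · left
    rw [List.eraseIdx_append_of_length_le le_rfl, Nat.sub_self, List.eraseIdx_cons_zero,
      List.append_nil, hRw] at hz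
    rw [← hz, mul_simpleRefl_mul_simpleRefl]

theorem BruhatStep.mul_simpleRefl_eq_or_bruhatStep {z w : Equiv.Perm (Fin n)}
    (h : BruhatStep n z w) {j : ℕ} (hj : 1 ≤ j ∧ j ≤ n - 1) :
    z * simpleRefl n j = w ∨ BruhatStep n (z * simpleRefl n j) (w * simpleRefl n j) := by
  refine (h.mul_simpleRefl_eq_or_len_lt hj).imp_right fun hlt => ?_
  obtain ⟨a, b, hab, -, rfl⟩ := h
  have hconj : w * Equiv.swap a b * simpleRefl n j =
      w * simpleRefl n j * Equiv.swap (simpleRefl n j a) (simpleRefl n j b) := by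
    rw [Equiv.swap_apply_apply, simpleRefl_inv, ← mul_assoc, ← mul_assoc,
      mul_simpleRefl_mul_simpleRefl]
  rw [hconj] at hlt ⊢
  exact bruhatStep_mul_swap_of_len_lt ((simpleRefl n j).injective.ne hab.ne) hlt

abbrev ChainLE (n : ℕ) : Equiv.Perm (Fin n) → Equiv.Perm (Fin n) → Prop :=
  Relation.ReflTransGen (BruhatStep n)

theorem ChainLE.exists_reduced_sublist {u x : Equiv.Perm (Fin n)} (h : ChainLE n u x)
    {L : List ℕ} (hL : IsSimpleWord n L) (hx : wordProd n L = x) :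
    ∃ U, U.Sublist L ∧ wordProd n U = u ∧ U.length = len n u := by
  induction h generalizing L with
  | refl =>
    obtain ⟨R, hRL, hR, hlen⟩ := KK.exists_reduced_sublist hL
    exact ⟨R, hRL, hR.trans hx, by rw [hlen, hx]⟩
  | tail _ hstep ih =>
    obtain ⟨i, -, hi⟩ := hstep.exists_eraseIdx hL hx
    obtain ⟨U, hU, rest⟩ := ih (hL.sublist (List.eraseIdx_sublist L i)) hi
    exact ⟨U, hU.trans (List.eraseIdx_sublist L i), rest⟩

theorem bruhatLE_of_chainLE {u w : Equiv.Perm (Fin n)} (h : ChainLE n u w) : bruhatLE n u w := by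
  obtain ⟨L, hL, hlen, hw⟩ := exists_reduced_word w
  obtain ⟨U, hUL, hU, hUlen⟩ := h.exists_reduced_sublist hL hw
  exact ⟨L, U, ⟨hL, by rw [hw, hlen]⟩, hw, hUL, ⟨hL.sublist hUL, by rw [hU, hUlen]⟩, hU⟩

theorem chainLE_demStep (w : Equiv.Perm (Fin n)) (j : ℕ) :
    ChainLE n w (demStep n w j) ∧ ChainLE n (w * simpleRefl n j) (demStep n w j) := by
  by_cases hj : 1 ≤ j ∧ j ≤ n - 1
  · unfold demStep
    rcases bruhatStep_mul_simpleRefl_or w hj with h | h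
    · rw [if_neg h.len_lt.asymm]
      exact ⟨.refl, .single h⟩
    · rw [if_pos h.len_lt]
      exact ⟨.single h, .refl⟩
  · simp only [demStep, simpleRefl_eq_one hj, mul_one, lt_irrefl, if_false]
    exact ⟨.refl, .refl⟩

theorem BruhatStep.demStep_chainLE {z w : Equiv.Perm (Fin n)} (h : BruhatStep n z w) (j : ℕ) :
    ChainLE n (demStep n z j) (demStep n w j) := by
  obtain ⟨hw, hws⟩ := chainLE_demStep w j
  by_cases hz : len n z < len n (z * simpleRefl n j)
  · rw [demStep, if_pos hz]
    have hj : 1 ≤ j ∧ j ≤ n - 1 := by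
      by_contra hj
      simp [simpleRefl_eq_one hj] at hz
    rcases h.mul_simpleRefl_eq_or_bruhatStep hj with he | h'
    · exact he ▸ hw
    · exact .head h' hws
  · rw [demStep, if_neg hz]
    exact .head h hw

theorem ChainLE.mul_simpleRefl_chainLE_demStep {u w : Equiv.Perm (Fin n)} (h : ChainLE n u w)
    (j : ℕ) : ChainLE n (u * simpleRefl n j) (demStep n w j) := by
  induction h with
  | refl => exact (chainLE_demStep u j).2
  | tail _ hstep ih => exact ih.trans (hstep.demStep_chainLE j)

theorem demProd_concat (l : List ℕ) (c : ℕ) :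
    demProd n (l ++ [c]) = demStep n (demProd n l) c := by
  simp [demProd, List.foldl_append]

theorem chainLE_wordProd_demProd {m l : List ℕ} (h : m.Sublist l) :
    ChainLE n (wordProd n m) (demProd n l) := by
  induction l using List.reverseRecOn generalizing m with
  | nil =>
    rw [List.sublist_nil.1 h]
    exact .refl
  | append_singleton l c ih =>
    rw [demProd_concat]
    obtain ⟨m₁, m₂, rfl, h₁, h₂⟩ := List.sublist_append_iff.1 h
    rcases List.sublist_singleton.1 h₂ with rfl | rfl
    · rw [List.append_nil]
      exact (ih h₁).trans (chainLE_demStep _ c).1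
    · rw [wordProd_concat]
      exact (ih h₁).mul_simpleRefl_chainLE_demStep c

theorem pairsFin_eq_reverse : pairsFin n = (pairsBar n).reverse := by
  simp [pairsFin, pairsBar, List.reverse_flatMap, Function.comp_def]

theorem sigmaBarF_inv (F : Finset (ℕ × ℕ)) :
    (sigmaBarF n F)⁻¹ = wordProd n (((pairsFin n).filter fun p => p ∈ F).map fun p => p.2) := by
  rw [sigmaBarF, ← wordProd_reverse, pairsFin_eq_reverse, List.filter_reverse, List.map_reverse]

end

theorem biVarpi_le_demProd_word_general (n : ℕ) (lam mu : ℕ → ℤ)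
    (F F' : Finset (ℕ × ℕ))
    (P Q : ℕ → ℕ → ℝ) (hPQ : (P, Q) ∈ biKoganFace n lam mu F F') :
    bruhatLE n (biVarpi n F F') (demProd n (fWord n P ++ iWord n Q)) := by
  obtain ⟨-, -, hF, hF'⟩ := hPQ
  have hsub : ((((pairsFin n).filter fun p => p ∈ F).map fun p => p.2) ++
      (((pairsLex n).filter fun p => p ∈ F').map fun p => p.1 - p.2)).Sublist
        (fWord n P ++ iWord n Q) :=
    ((List.monotone_filter_right _ fun p hp => by simpa using hF p (by simpa using hp)).map _).append
      ((List.monotone_filter_right _ fun p hp => by simpa using hF' p (by simpa using hp)).map _)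
  rw [biVarpi, sigmaBarF_inv, sigmaF, ← wordProd_append]
  exact bruhatLE_of_chainLE (chainLE_wordProd_demProd hsub)

/-- If the BiKogan face `K_{λ,μ}(F,F')` is reduced and
`(P,Q) ∈ K_{λ,μ}(F,F')`, then `ϖ(F,F') ≤ *(w(P,Q))` in the Bruhat order. -/
theorem biVarpi_le_demProd_word (n : ℕ) (hn : 1 ≤ n) (lam mu : ℕ → ℤ)
    (hlam : IsPartition n lam) (hmu : IsPartition n mu)
    (F F' : Finset (ℕ × ℕ)) (hF : ∀ p ∈ F, inTriangle n p) (hF' : ∀ p ∈ F', inTriangle n p)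
    (hred : biKoganReduced n F F')
    (P Q : ℕ → ℕ → ℝ) (hPQ : (P, Q) ∈ biKoganFace n lam mu F F') :
    bruhatLE n (biVarpi n F F') (demProd n (fWord n P ++ iWord n Q)) :=
  biVarpi_le_demProd_word_general n lam mu F F' P Q hPQ

end KK
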